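/- arXiv:1305.4225 — 2 statements merged into one kernel-verified Lean document; each statement's English description precedes it below -/
import Mathlib

section
/- Let (M, 𝓜, μ) be a σ-finite separable measure space with 0 < μ(M) ≤ ∞. Let A(·,·): M × M → ℂ be μ⊗μ-measurable and suppose that for every f ∈ L²(M; dμ), the function A(x,·)f(·) is absolutely integrable over M for μ-a.e. x ∈ M and that the function x ↦ ∫_M A(x,y) f(y) dμ(y) belongs to L²(M; dμ), so that (Af)(x) := ∫_M A(x,y) f(y) dμ(y) defines a linear operator A on L²(M; dμ); assume in addition that A is bounded on L²(M; dμ). Then A is positivity preserving if and only if A(x,y) ≥ 0 (i.e., A(x,y) is real and nonnegative) for μ⊗μ-a.e. (x,y) ∈ M × M. -/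
/-!
Testing positivity on the indicator of a finite-measure set `t` gives `0 ≤ ∫ y in t, k (x, y)`
for a.e. `x`, with an exceptional null set depending on `t`. Separability provides a countable
measure-dense family of sets; on it the null sets can be collected, and absolute continuity of
the integral propagates nonnegativity of `t ↦ ∫ y in t, k (x, y)` from the family to all
measurable `t` inside each piece of a σ-finite exhaustion, where `k (x, ·)` is integrable. Hence
`k (x, ·) ≥ 0` a.e. for a.e. `x`, which measurability of `k` upgrades to `k ≥ 0` a.e. on `M × M`.
The converse is monotonicity of the integral.
-/

open MeasureTheory Filter Topology
open scoped ComplexOrder ENNReal symmDiff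

theorem Complex.ae_nonneg_of_forall_setIntegral_nonneg {X : Type*} [MeasurableSpace X]
    {μ : Measure X} {g : X → ℂ} (hg : Integrable g μ)
    (h : ∀ s, MeasurableSet s → μ s < ∞ → 0 ≤ ∫ x in s, g x ∂μ) : 0 ≤ᵐ[μ] g := by
  have hg_re : Integrable (fun x => (g x).re) μ := by simpa using hg.re
  have hg_im : Integrable (fun x => (g x).im) μ := by simpa using hg.im
  have re_eq (s : Set X) : ∫ x in s, (g x).re ∂μ = (∫ x in s, g x ∂μ).re := by
    simpa using integral_re hg.integrableOn
  have im_eq (s : Set X) : ∫ x in s, (g x).im ∂μ = (∫ x in s, g x ∂μ).im := by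
    simpa using integral_im hg.integrableOn
  have re_nonneg : 0 ≤ᵐ[μ] fun x => (g x).re :=
    MeasureTheory.ae_nonneg_of_forall_setIntegral_nonneg hg_re fun s hs hμs =>
      re_eq s ▸ (nonneg_iff.1 (h s hs hμs)).1
  have im_zero : (fun x => (g x).im) =ᵐ[μ] 0 :=
    hg_im.ae_eq_zero_of_forall_setIntegral_eq_zero fun s hs hμs =>
      im_eq s ▸ (nonneg_iff.1 (h s hs hμs)).2.symm
  filter_upwards [re_nonneg, im_zero] with x hre him
  exact nonneg_iff.2 ⟨hre, him.symm⟩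

namespace MeasureTheory

variable {X : Type*} [MeasurableSpace X] {μ : Measure X} {𝒜 : Set (Set X)}

theorem Measure.MeasureDense.setIntegral_mem {E : Type*} [NormedAddCommGroup E]
    [NormedSpace ℝ E] (h𝒜 : μ.MeasureDense 𝒜) {g : X → E} (hg : Integrable g μ) {C : Set E}
    (hC : IsClosed C) (h : ∀ t ∈ 𝒜, ∫ x in t, g x ∂μ ∈ C) {s : Set X} (hs : MeasurableSet s)
    (hμs : μ s ≠ ∞) : ∫ x in s, g x ∂μ ∈ C := by
  choose t ht𝒜 hts using fun n : ℕ =>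
    h𝒜.approx s hs hμs (1 / (n + 1)) Nat.one_div_pos_of_nat
  have hts0 : Tendsto (fun n => μ (s ∆ t n)) atTop (𝓝 0) := by
    refine tendsto_of_tendsto_of_tendsto_of_le_of_le tendsto_const_nhds ?_ (fun _ => zero_le)
      fun n => (hts n).le
    simpa using ENNReal.tendsto_ofReal tendsto_one_div_add_atTop_nhds_zero_nat
  have small : ∀ {u : ℕ → Set X}, (∀ n, u n ⊆ s ∆ t n) →
      Tendsto (fun n => ∫ x in u n, g x ∂μ) atTop (𝓝 0) := fun hu =>
    hg.tendsto_setIntegral_nhds_zero <| tendsto_of_tendsto_of_tendsto_of_le_of_le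
      tendsto_const_nhds hts0 (fun _ => zero_le) fun n => measure_mono (hu n)
  have split : ∀ n, ∫ x in t n, g x ∂μ =
      ∫ x in s, g x ∂μ + (∫ x in t n \ s, g x ∂μ - ∫ x in s \ t n, g x ∂μ) := fun n => by
    rw [← integral_inter_add_sdiff hs (hg.integrableOn (s := t n)),
      ← integral_inter_add_sdiff (h𝒜.measurable _ (ht𝒜 n)) (hg.integrableOn (s := s)),
      Set.inter_comm]
    abel
  have lim : Tendsto (fun n => ∫ x in t n, g x ∂μ) atTop (𝓝 (∫ x in s, g x ∂μ)) := by
    simp_rw [split]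
    simpa using tendsto_const_nhds.add
      ((small fun _ => Set.subset_union_right).sub (small fun _ => Set.subset_union_left))
  exact hC.mem_of_tendsto lim (Eventually.of_forall fun n => h _ (ht𝒜 n))

theorem Measure.MeasureDense.restrict_inter (h𝒜 : μ.MeasureDense 𝒜) {S : Set X}
    (hS : MeasurableSet S) : (μ.restrict S).MeasureDense ((· ∩ S) '' 𝒜) where
  measurable := by
    rintro _ ⟨t, ht, rfl⟩
    exact (h𝒜.measurable t ht).inter hS
  approx s hs hμs ε hε := by
    rw [Measure.restrict_apply hs] at hμs
    obtain ⟨t, ht, hst⟩ := h𝒜.approx (s ∩ S) (hs.inter hS) hμs ε hε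
    refine ⟨t ∩ S, ⟨t, ht, rfl⟩, lt_of_le_of_lt ?_ hst⟩
    calc μ.restrict S (s ∆ (t ∩ S)) = μ ((s ∩ S) ∆ t ∩ S) := by
          rw [Measure.restrict_apply' hS]
          congr 1
          ext x
          simp only [Set.mem_inter_iff, Set.mem_symmDiff]
          tauto
      _ ≤ μ ((s ∩ S) ∆ t) := measure_mono Set.inter_subset_left

theorem Measure.MeasureDense.ae_nonneg_of_forall_setIntegral_nonneg (h𝒜 : μ.MeasureDense 𝒜)
    {g : X → ℂ} (hg : Integrable g μ) (h : ∀ t ∈ 𝒜, 0 ≤ ∫ x in t, g x ∂μ) : 0 ≤ᵐ[μ] g :=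
  Complex.ae_nonneg_of_forall_setIntegral_nonneg hg fun _ hs hμs =>
    h𝒜.setIntegral_mem hg isClosed_Ici h hs hμs.ne

theorem ae_ae_nonneg_of_forall_setIntegral_nonneg [SigmaFinite μ] [IsSeparable μ]
    {Y : Type*} [MeasurableSpace Y] {ν : Measure Y} {g : Y → X → ℂ}
    (h : ∀ t, MeasurableSet t → μ t ≠ ∞ →
      ∀ᵐ y ∂ν, IntegrableOn (g y) t μ ∧ 0 ≤ ∫ x in t, g y x ∂μ) :
    ∀ᵐ y ∂ν, ∀ᵐ x ∂μ, 0 ≤ g y x := by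
  obtain ⟨𝒜, h𝒜c, h𝒜⟩ := exists_countable_measureDense μ
  set S := spanningSets μ
  have hS_fin : ∀ {n t}, t ⊆ S n → μ t ≠ ∞ := fun hsub =>
    ((measure_mono hsub).trans_lt (measure_spanningSets_lt_top μ _)).ne
  have on_S : ∀ᵐ y ∂ν, ∀ n, IntegrableOn (g y) (S n) μ :=
    ae_all_iff.2 fun n => (h _ (measurableSet_spanningSets μ n) (hS_fin subset_rfl)).mono
      fun _ hy => hy.1
  have on_𝒜 : ∀ᵐ y ∂ν, ∀ n, ∀ t ∈ 𝒜, 0 ≤ ∫ x in t ∩ S n, g y x ∂μ :=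
    ae_all_iff.2 fun n => (ae_ball_iff h𝒜c).2 fun t ht =>
      (h _ ((h𝒜.measurable t ht).inter (measurableSet_spanningSets μ n))
        (hS_fin Set.inter_subset_right)).mono fun _ hy => hy.2
  filter_upwards [on_S, on_𝒜] with y hint hnonneg
  rw [← Measure.restrict_univ (μ := μ), ← iUnion_spanningSets μ, ae_restrict_iUnion_iff]
  intro n
  have hSn := measurableSet_spanningSets μ n
  refine (h𝒜.restrict_inter hSn).ae_nonneg_of_forall_setIntegral_nonneg (hint n) ?_
  rintro _ ⟨t, ht, rfl⟩
  rw [Measure.restrict_restrict ((h𝒜.measurable t ht).inter hSn), Set.inter_assoc, Set.inter_self]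
  exact hnonneg n t ht

theorem Measure.ae_prod_mem_of_ae_ae_mem {Y Z : Type*} [MeasurableSpace Y] [MeasurableSpace Z]
    {ν : Measure Y} [SFinite ν] {f : X × Y → Z} (hf : AEMeasurable f (μ.prod ν)) {s : Set Z}
    (hs : MeasurableSet s) (h : ∀ᵐ x ∂μ, ∀ᵐ y ∂ν, f (x, y) ∈ s) : ∀ᵐ z ∂μ.prod ν, f z ∈ s := by
  have hmk : ∀ᵐ z ∂μ.prod ν, hf.mk f z ∈ s := by
    refine (Measure.ae_prod_mem_iff_ae_ae_mem (hf.measurable_mk hs)).2 ?_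
    filter_upwards [h, Measure.ae_ae_of_ae_prod hf.ae_eq_mk] with x hx hfx
    filter_upwards [hx, hfx] with y hxy hfxy
    rw [Set.mem_preimage, ← hfxy]
    exact hxy
  filter_upwards [hmk, hf.ae_eq_mk] with z hz hfz
  rwa [hfz]

theorem mul_indicatorConstLp_one_ae_eq {R : Type*} [NormedRing R] {p : ℝ≥0∞} {s : Set X}
    (hs : MeasurableSet s) (hμs : μ s ≠ ∞) (g : X → R) :
    (fun x => g x * indicatorConstLp p hs hμs (1 : R) x) =ᵐ[μ] s.indicator g := by
  filter_upwards [indicatorConstLp_coeFn (p := p) (hs := hs) (hμs := hμs) (c := (1 : R))]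
    with x hx
  by_cases hxs : x ∈ s <;> simp [hx, hxs]

theorem indicatorConstLp_nonneg {E : Type*} [NormedAddCommGroup E] [Preorder E] {p : ℝ≥0∞}
    {s : Set X} (hs : MeasurableSet s) (hμs : μ s ≠ ∞) {c : E} (hc : 0 ≤ c) :
    0 ≤ᵐ[μ] indicatorConstLp p hs hμs c := by
  filter_upwards [indicatorConstLp_coeFn (p := p) (hs := hs) (hμs := hμs) (c := c)] with x hx
  rw [hx]
  exact Set.indicator_nonneg (fun _ _ => hc) x

theorem ae_integrableOn_and_setIntegral_nonneg_of_positivity_preserving {k : X × X → ℂ}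
    {A : Lp ℂ 2 μ →L[ℂ] Lp ℂ 2 μ}
    (hint : ∀ f : Lp ℂ 2 μ, ∀ᵐ x ∂μ, Integrable (fun y => k (x, y) * f y) μ)
    (hA : ∀ f : Lp ℂ 2 μ, (A f : X → ℂ) =ᵐ[μ] fun x => ∫ y, k (x, y) * f y ∂μ)
    (hpos : ∀ f : Lp ℂ 2 μ, f ≠ 0 → (∀ᵐ x ∂μ, 0 ≤ f x) → ∀ᵐ x ∂μ, 0 ≤ A f x)
    {t : Set X} (ht : MeasurableSet t) (hμt : μ t ≠ ∞) :
    ∀ᵐ x ∂μ, IntegrableOn (fun y => k (x, y)) t μ ∧ 0 ≤ ∫ y in t, k (x, y) ∂μ := by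
  set f := indicatorConstLp 2 ht hμt (1 : ℂ)
  have hAf : ∀ᵐ x ∂μ, 0 ≤ A f x := by
    by_cases hf : f = 0
    · filter_upwards [Lp.coeFn_zero ℂ 2 μ] with x hx
      rw [hf, map_zero, hx]
      rfl
    · exact hpos f hf (indicatorConstLp_nonneg ht hμt zero_le_one)
  filter_upwards [hint f, hA f, hAf] with x hx_int hx_Af hx_pos
  have hx := mul_indicatorConstLp_one_ae_eq (p := 2) ht hμt fun y => k (x, y)
  refine ⟨(integrable_indicator_iff ht).1 ((integrable_congr hx).1 hx_int), ?_⟩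
  rwa [← integral_indicator ht, ← integral_congr_ae hx, ← hx_Af]

end MeasureTheory

theorem integral_operator_positivity_preserving_iff_kernel_nonneg_general
    {M : Type*} [MeasurableSpace M] (μ : Measure M) [SigmaFinite μ]
    [MeasureTheory.IsSeparable μ]
    (k : M × M → ℂ) (hk : AEMeasurable k (μ.prod μ))
    (A : Lp ℂ 2 μ →L[ℂ] Lp ℂ 2 μ)
    (hint : ∀ f : Lp ℂ 2 μ, ∀ᵐ x ∂μ, Integrable (fun y => k (x, y) * f y) μ)
    (hA : ∀ f : Lp ℂ 2 μ, (A f : M → ℂ) =ᵐ[μ] fun x => ∫ y, k (x, y) * f y ∂μ) :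
    (∀ f : Lp ℂ 2 μ, f ≠ 0 → (∀ᵐ x ∂μ, 0 ≤ f x) → (∀ᵐ x ∂μ, 0 ≤ A f x)) ↔
      (∀ᵐ p ∂(μ.prod μ), 0 ≤ k p) := by
  constructor
  · intro hpos
    refine Measure.ae_prod_mem_of_ae_ae_mem hk measurableSet_Ici ?_
    exact ae_ae_nonneg_of_forall_setIntegral_nonneg fun t ht hμt =>
      ae_integrableOn_and_setIntegral_nonneg_of_positivity_preserving hint hA hpos ht hμt
  · intro hk_nonneg f _ hf
    filter_upwards [hA f, hint f, Measure.ae_ae_of_ae_prod hk_nonneg] with x hx_Af hx_int hx_k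
    rw [hx_Af]
    refine integral_nonneg_of_ae ?_
    filter_upwards [hf, hx_k] with y hfy hky
    exact mul_nonneg hky hfy

/-- Let `A` be a bounded integral operator on `L²(M; dμ)` with `μ ⊗ μ`-measurable integral
kernel `k`.  Then `A` is positivity preserving if and only if `k ≥ 0` holds
`μ ⊗ μ`-a.e. on `M × M`. -/
theorem integral_operator_positivity_preserving_iff_kernel_nonneg
    {M : Type*} [MeasurableSpace M] (μ : Measure M) [SigmaFinite μ]
    [MeasureTheory.IsSeparable μ] (hμ : μ ≠ 0)
    (k : M × M → ℂ) (hk : AEMeasurable k (μ.prod μ))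
    (A : Lp ℂ 2 μ →L[ℂ] Lp ℂ 2 μ)
    (hint : ∀ f : Lp ℂ 2 μ, ∀ᵐ x ∂μ, Integrable (fun y => k (x, y) * f y) μ)
    (hA : ∀ f : Lp ℂ 2 μ, (A f : M → ℂ) =ᵐ[μ] fun x => ∫ y, k (x, y) * f y ∂μ) :
    (∀ f : Lp ℂ 2 μ, f ≠ 0 → (∀ᵐ x ∂μ, 0 ≤ f x) → (∀ᵐ x ∂μ, 0 ≤ A f x)) ↔
      (∀ᵐ p ∂(μ.prod μ), 0 ≤ k p) :=
  integral_operator_positivity_preserving_iff_kernel_nonneg_general μ k hk A hint hA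
end

section
/- Let c > 0 and μ > 0 be real constants. Then there exists a finite constant C ≥ 0 such that for every r > 0: ∫₀^∞ t^{-1}·(1+t)·exp(−μ t)·exp(−c r²/t) dt ≤ C·ln(1 + r^{-1}). -/
/-!
Bounding `exp (-c r² / t) ≤ (1 + c⁻¹) t / (t + r²)` reduces the integral to
`∫₀^∞ g(t) / (t + r²) dt` with `g(t) = (1 + t) e^{-μ t}`. On `(0, 1]` this is at most
`2 ∫₀¹ dt / (t + r²) = 2 log (1 + r⁻²)`; on `(1, ∞)` one has
`1 / (t + r²) ≤ 1 / (1 + r²) ≤ log (1 + r⁻²)`, so that piece is at most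
`log (1 + r⁻²) ∫₁^∞ g`. Finally `log (1 + r⁻²) ≤ 2 log (1 + r⁻¹)`.
-/

open MeasureTheory Set Real

lemma exp_neg_mul_le_div_one_add {c y : ℝ} (hc : 0 < c) (hy : 0 ≤ y) :
    exp (-(c * y)) ≤ (1 + c⁻¹) / (1 + y) := by
  have hexp : exp (-(c * y)) * (1 + c * y) ≤ 1 := by
    rw [exp_neg, inv_mul_le_iff₀ (exp_pos _), mul_one, add_comm]
    exact add_one_le_exp _
  have hlin : 1 + y ≤ (1 + c⁻¹) * (1 + c * y) := by
    have h : (1 + c⁻¹) * (1 + c * y) = 1 + y + c * y + c⁻¹ := by field_simp; ring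
    rw [h]
    have := mul_nonneg hc.le hy
    have := inv_pos.2 hc
    linarith
  rw [le_div_iff₀ (by positivity)]
  calc exp (-(c * y)) * (1 + y) ≤ exp (-(c * y)) * ((1 + c⁻¹) * (1 + c * y)) := by gcongr
    _ = (1 + c⁻¹) * (exp (-(c * y)) * (1 + c * y)) := by ring
    _ ≤ 1 + c⁻¹ := mul_le_of_le_one_right (by positivity) hexp

lemma inv_mul_exp_neg_sq_div_le {c μ r t : ℝ} (hc : 0 < c) (ht : 0 < t) :
    t⁻¹ * (1 + t) * exp (-μ * t) * exp (-c * r ^ 2 / t) ≤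
      (1 + c⁻¹) * ((1 + t) * exp (-μ * t) / (t + r ^ 2)) := by
  have hexp := exp_neg_mul_le_div_one_add hc (by positivity : 0 ≤ r ^ 2 / t)
  rw [show -c * r ^ 2 / t = -(c * (r ^ 2 / t)) by ring]
  calc t⁻¹ * (1 + t) * exp (-μ * t) * exp (-(c * (r ^ 2 / t)))
      ≤ t⁻¹ * (1 + t) * exp (-μ * t) * ((1 + c⁻¹) / (1 + r ^ 2 / t)) := by gcongr
    _ = (1 + c⁻¹) * ((1 + t) * exp (-μ * t) / (t + r ^ 2)) := by field_simp

lemma integral_Ioc_zero_one_inv_add {a : ℝ} (ha : 0 < a) :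
    ∫ t in Ioc 0 1, (t + a)⁻¹ = log (1 + a⁻¹) := by
  rw [← intervalIntegral.integral_of_le zero_le_one,
    intervalIntegral.integral_comp_add_right (fun t => t⁻¹),
    integral_inv_of_pos (by linarith) (by linarith)]
  congr 1
  field_simp
  ring

lemma inv_one_add_le_log_one_add_inv {a : ℝ} (ha : 0 < a) : (1 + a)⁻¹ ≤ log (1 + a⁻¹) := by
  convert one_sub_inv_le_log_of_pos (by positivity : 0 < 1 + a⁻¹) using 1
  field_simp
  ring

lemma log_one_add_inv_sq_le {r : ℝ} (hr : 0 < r) :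
    log (1 + (r ^ 2)⁻¹) ≤ 2 * log (1 + r⁻¹) := by
  rw [show 2 * log (1 + r⁻¹) = log ((1 + r⁻¹) ^ 2) by rw [log_pow]; norm_num]
  apply log_le_log (by positivity)
  have := inv_pos.2 hr
  rw [← inv_pow]
  nlinarith

lemma MeasureTheory.IntegrableOn.div_add_const {g : ℝ → ℝ} {a : ℝ} (hg : IntegrableOn g (Ioi 0)) (ha : 0 < a) :
    IntegrableOn (fun t => g t / (t + a)) (Ioi 0) := by
  simp_rw [div_eq_inv_mul]
  refine Integrable.bdd_mul (c := a⁻¹) hg (by fun_prop) ?_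
  rw [ae_restrict_iff' measurableSet_Ioi]
  refine Filter.Eventually.of_forall fun t (ht : 0 < t) => ?_
  rw [norm_inv, Real.norm_of_nonneg (by linarith)]
  gcongr
  linarith

lemma setIntegral_Ioi_div_add_le_mul_log {g : ℝ → ℝ} {a B : ℝ} (ha : 0 < a)
    (hg : IntegrableOn g (Ioi 0)) (hg_nonneg : ∀ t ∈ Ioi 0, 0 ≤ g t)
    (hg_le : ∀ t ∈ Ioc 0 1, g t ≤ B) :
    ∫ t in Ioi 0, g t / (t + a) ≤ (B + ∫ t in Ioi 1, g t) * log (1 + a⁻¹) := by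
  have hint := hg.div_add_const ha
  have hnear : ∫ t in Ioc 0 1, g t / (t + a) ≤ B * log (1 + a⁻¹) := by
    rw [← integral_Ioc_zero_one_inv_add ha, ← integral_const_mul]
    have hbound : IntegrableOn (fun t => B * (t + a)⁻¹) (Icc 0 1) :=
      ContinuousOn.integrableOn_Icc <| continuousOn_const.mul <|
        (continuousOn_id.add continuousOn_const).inv₀ fun t ht => by
          simp only [Pi.add_apply, id]; linarith [ht.1]
    refine setIntegral_mono_on (hint.mono_set Ioc_subset_Ioi_self)
      (hbound.mono_set Ioc_subset_Icc_self) measurableSet_Ioc fun t ht => ?_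
    rw [div_eq_mul_inv]
    have : 0 < t + a := by linarith [ht.1]
    gcongr
    exact hg_le t ht
  have hfar : ∫ t in Ioi 1, g t / (t + a) ≤ (∫ t in Ioi 1, g t) * log (1 + a⁻¹) := by
    have hIoi : Ioi (1 : ℝ) ⊆ Ioi 0 := Ioi_subset_Ioi zero_le_one
    rw [← integral_mul_const]
    refine setIntegral_mono_on (hint.mono_set hIoi) ((hg.mono_set hIoi).mul_const _)
      measurableSet_Ioi fun t (ht : 1 < t) => ?_
    have hgt := hg_nonneg t (hIoi ht)
    calc g t / (t + a) ≤ g t * (1 + a)⁻¹ := by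
          rw [div_eq_mul_inv]
          gcongr
      _ ≤ g t * log (1 + a⁻¹) := by
          gcongr
          exact inv_one_add_le_log_one_add_inv ha
  rw [← Ioc_union_Ioi_eq_Ioi zero_le_one, setIntegral_union Ioc_disjoint_Ioi_same
    measurableSet_Ioi (hint.mono_set Ioc_subset_Ioi_self)
    (hint.mono_set (Ioi_subset_Ioi zero_le_one))]
  linarith

lemma integrableOn_one_add_mul_exp_neg_mul {μ : ℝ} (hμ : 0 < μ) :
    IntegrableOn (fun t => (1 + t) * exp (-μ * t)) (Ioi 0) := by
  have hlin : IntegrableOn (fun t : ℝ => t ^ (1 : ℝ) * exp (-μ * t ^ (1 : ℝ))) (Ioi 0) :=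
    integrableOn_rpow_mul_exp_neg_mul_rpow (by norm_num) one_pos hμ
  simp only [rpow_one] at hlin
  refine ((exp_neg_integrableOn_Ioi 0 hμ).add hlin).congr_fun (fun t _ => ?_) measurableSet_Ioi
  simp only [Pi.add_apply]
  ring

/-- For `c > 0`, `μ > 0`, there is a finite constant `C ≥ 0` such that
`∫₀^∞ t^{-1} (1+t) e^{-μ t} e^{-c r²/t} dt ≤ C ln(1 + r⁻¹)` for every `r > 0`.  This
converts the two-dimensional Gaussian heat kernel bound into the logarithmic Green's
function bound. -/
theorem greens_function_bound_dim_two (c μ : ℝ) (hc : 0 < c) (hμ : 0 < μ) :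
    ∃ C : ℝ, 0 ≤ C ∧ ∀ r : ℝ, 0 < r →
      (∫ t in Set.Ioi (0 : ℝ),
          t⁻¹ * (1 + t) * Real.exp (-μ * t) * Real.exp (-c * r ^ 2 / t)) ≤
        C * Real.log (1 + r⁻¹) := by
  set g : ℝ → ℝ := fun t => (1 + t) * exp (-μ * t)
  have hg := integrableOn_one_add_mul_exp_neg_mul hμ
  have hg_nonneg : ∀ t ∈ Ioi (0 : ℝ), 0 ≤ g t := fun t (ht : 0 < t) => by positivity
  have hg_le : ∀ t ∈ Ioc (0 : ℝ) 1, g t ≤ 2 := fun t ⟨ht0, ht1⟩ =>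
    calc (1 + t) * exp (-μ * t) ≤ 2 * 1 := by
          gcongr
          · linarith
          · exact exp_le_one_iff.2 (by nlinarith)
      _ = 2 := mul_one 2
  set M := ∫ t in Ioi 1, g t
  have hM : 0 ≤ M :=
    setIntegral_nonneg measurableSet_Ioi fun t (ht : 1 < t) => hg_nonneg t (zero_lt_one.trans ht)
  refine ⟨(1 + c⁻¹) * (2 + M) * 2, by positivity, fun r hr => ?_⟩
  calc (∫ t in Ioi 0, t⁻¹ * (1 + t) * exp (-μ * t) * exp (-c * r ^ 2 / t))
      ≤ ∫ t in Ioi 0, (1 + c⁻¹) * (g t / (t + r ^ 2)) :=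
        setIntegral_mono_of_nonneg (fun t (ht : 0 < t) => by positivity)
          (fun t ht => inv_mul_exp_neg_sq_div_le hc ht)
          ((hg.div_add_const (by positivity)).const_mul _)
    _ = (1 + c⁻¹) * ∫ t in Ioi 0, g t / (t + r ^ 2) := integral_const_mul _ _
    _ ≤ (1 + c⁻¹) * ((2 + M) * log (1 + (r ^ 2)⁻¹)) := by
        gcongr
        exact setIntegral_Ioi_div_add_le_mul_log (by positivity) hg hg_nonneg hg_le
    _ ≤ (1 + c⁻¹) * ((2 + M) * (2 * log (1 + r⁻¹))) := by
        gcongr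
        exact log_one_add_inv_sq_le hr
    _ = (1 + c⁻¹) * (2 + M) * 2 * log (1 + r⁻¹) := by ring
end
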